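/- Let f₁ : [0,1] → ℝ be the characteristic function of {1/n : n ∈ ℕ, n ≥ 1}, and let f₂ : [0,1] → ℝ be the characteristic function of the set S = { Σ_{i=1}^{n−1} d_i·3^{−i} + (3/2)·3^{−n} : n ≥ 1, each d_i ∈ {0,2} } (the set of midpoints of the open middle-third intervals removed in the construction of the Cantor set). Then it is NOT the case that for every rational p and positive rational ε there exist a rational q, a positive rational δ, and a continuous k : [0,1] → [0,1] such that for every x ∈ [0,1] and every bit b, if b is a correct answer to 'f₁(k(x)) ≲_δ q' then b is a correct answer to 'f₂(x) ≲_ε p'; indeed, this transfer condition already fails for p = 1/2 and ε = 1/3, for every choice of q, δ and continuous k. -/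
import Mathlib


/-- The unit interval `[0,1]`. -/
abbrev UnitI : Type := Set.Icc (0 : ℝ) 1

/-- A bit `b` is a correct answer to the question `f x ≲_ε p`, for `f : [0,1] → ℝ`. -/
def CorrectAnswerI (f : UnitI → ℝ) (x : UnitI) (p ε : ℚ) (b : Bool) : Prop :=
  (b = true ∧ f x < (p : ℝ) + (ε : ℝ)) ∨ (b = false ∧ (p : ℝ) - (ε : ℝ) < f x)

/-- `f₁`: the characteristic function of `{1/n : n ≥ 1}` on `[0,1]`. -/
noncomputable def charRecip : UnitI → ℝ :=
  fun x => Set.indicator {x : UnitI | ∃ n : ℕ, 1 ≤ n ∧ (x : ℝ) = 1 / (n : ℝ)}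
    (fun _ => (1 : ℝ)) x

/-- The set of midpoints of the open middle-third intervals removed in the construction
of the Cantor set: points `Σ_{i=1}^{n-1} d_i·3^{-i} + (3/2)·3^{-n}` with `d_i ∈ {0,2}`. -/
def midThirds : Set ℝ :=
  {y : ℝ | ∃ n : ℕ, 1 ≤ n ∧ ∃ d : ℕ → ℝ, (∀ i, d i = 0 ∨ d i = 2) ∧
    y = (∑ i ∈ Finset.Ico 1 n, d i * (3 : ℝ) ^ (-(i : ℤ))) + (3 / 2) * (3 : ℝ) ^ (-(n : ℤ))}

/-- `f₂`: the characteristic function of the set of midpoints of removed middle thirds. -/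
noncomputable def charMidThirds : UnitI → ℝ :=
  fun x => Set.indicator {x : UnitI | (x : ℝ) ∈ midThirds} (fun _ => (1 : ℝ)) x

lemma threepow (i : ℕ) : (3:ℝ) ^ (-(i:ℤ)) = (1/3:ℝ)^i := by
  rw [zpow_neg, zpow_natCast, one_div, inv_pow]

lemma geom23 {m n : ℕ} (h : m ≤ n) :
    ∑ i ∈ Finset.Ico m n, (2:ℝ) * (1/3)^i = 3 * ((1/3:ℝ)^m - (1/3)^n) := by
  rw [← Finset.mul_sum, geom_sum_Ico (by norm_num : (1/3:ℝ) ≠ 1) h]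
  ring

lemma mu_mem_mid (j : ℕ) (hj : 2 ≤ j) : (1/3 - (3/2) * (1/3:ℝ)^j) ∈ midThirds := by
  refine ⟨j, by omega, fun i => if i ≤ 1 then 0 else 2, fun i => by by_cases h : i ≤ 1 <;> simp [h], ?_⟩
  have hsplit : ∑ i ∈ Finset.Ico 1 j, (if i ≤ 1 then (0:ℝ) else 2) * (3 : ℝ) ^ (-(i : ℤ))
      = ∑ i ∈ Finset.Ico 2 j, (2:ℝ) * (1/3)^i := by
    rw [Finset.sum_eq_sum_Ico_succ_bot (by omega : 1 < j)]
    simp only [le_refl, if_true]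
    rw [zero_mul, zero_add]
    apply Finset.sum_congr rfl
    intro i hi
    rw [Finset.mem_Ico] at hi
    rw [if_neg (by omega), threepow]
  rw [hsplit, geom23 (by omega), threepow]
  norm_num
  ring

lemma not_mid_middle {y : ℝ} (hy : y ∈ Set.Icc (1/3:ℝ) (2/3)) (hy2 : y ≠ 1/2) :
    y ∉ midThirds := by
  rintro ⟨n, hn, d, hd, rfl⟩
  rcases eq_or_lt_of_le hn with h1 | h1
  · apply hy2
    rw [← h1]
    simp [threepow]
    norm_num
  · rcases hd 1 with hd1 | hd1
    · -- y < 1/3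
      have hb : ∑ i ∈ Finset.Ico 1 n, d i * (3 : ℝ) ^ (-(i : ℤ))
          ≤ 1/3 - 3 * (1/3:ℝ)^n := by
        rw [Finset.sum_eq_sum_Ico_succ_bot (by omega : 1 < n), hd1, zero_mul, zero_add]
        calc ∑ i ∈ Finset.Ico 2 n, d i * (3 : ℝ) ^ (-(i : ℤ))
            ≤ ∑ i ∈ Finset.Ico 2 n, (2:ℝ) * (1/3)^i := by
              apply Finset.sum_le_sum
              intro i _
              rw [threepow]
              have h2 : d i ≤ 2 := by rcases hd i with h' | h' <;> norm_num [h']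
              exact mul_le_mul_of_nonneg_right h2 (by positivity)
          _ = 3 * ((1/3:ℝ)^2 - (1/3)^n) := geom23 (by omega)
          _ = 1/3 - 3 * (1/3:ℝ)^n := by ring
      have hp : (0:ℝ) < (1/3:ℝ)^n := by positivity
      have := hy.1
      rw [threepow] at this
      linarith
    · -- y > 2/3
      have hb : (2:ℝ)/3 ≤ ∑ i ∈ Finset.Ico 1 n, d i * (3 : ℝ) ^ (-(i : ℤ)) := by
        rw [Finset.sum_eq_sum_Ico_succ_bot (by omega : 1 < n), hd1]
        have hs : (0:ℝ) ≤ ∑ i ∈ Finset.Ico 2 n, d i * (3 : ℝ) ^ (-(i : ℤ)) := by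
          apply Finset.sum_nonneg
          intro i _
          rcases hd i with h' | h' <;> rw [h'] <;> positivity
        rw [threepow]
        have hpow : ((1:ℝ)/3)^1 = 1/3 := pow_one _
        linarith
      have hp : (0:ℝ) < (3/2) * (3:ℝ)^(-(n:ℤ)) := by positivity
      have := hy.2
      linarith

lemma half_mem_mid : (1/2 : ℝ) ∈ midThirds := by
  refine ⟨1, le_refl 1, fun _ => 0, fun i => Or.inl rfl, ?_⟩
  simp [threepow]
  norm_num

lemma zero_not_mid : (0:ℝ) ∉ midThirds := by
  rintro ⟨n, hn, d, hd, h⟩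
  have h1 : (0:ℝ) ≤ ∑ i ∈ Finset.Ico 1 n, d i * (3 : ℝ) ^ (-(i : ℤ)) := by
    apply Finset.sum_nonneg
    intro i _
    rcases hd i with h' | h' <;> rw [h'] <;> positivity
  have h2 : (0:ℝ) < (3 / 2) * (3 : ℝ) ^ (-(n : ℤ)) := by positivity
  linarith

/-- The literal transfer condition (an `≤_m`-style reduction of `charMidThirds` to
`charRecip` using continuous maps of `[0,1]` itself) fails; indeed it already fails for
`p = 1/2` and `ε = 1/3`, for every choice of `q`, `δ` and continuous `k`. -/
theorem charMidThirds_not_mPrime_charRecip :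
    (¬ ∀ p ε : ℚ, 0 < ε → ∃ q δ : ℚ, 0 < δ ∧ ∃ k : UnitI → UnitI, Continuous k ∧
        ∀ (x : UnitI) (b : Bool),
          CorrectAnswerI charRecip (k x) q δ b → CorrectAnswerI charMidThirds x p ε b) ∧
    (∀ q δ : ℚ, 0 < δ → ∀ k : UnitI → UnitI, Continuous k →
      ¬ ∀ (x : UnitI) (b : Bool),
          CorrectAnswerI charRecip (k x) q δ b →
            CorrectAnswerI charMidThirds x (1/2) (1/3) b) := by
  have hcr1 : ∀ y : UnitI, (∃ n : ℕ, 1 ≤ n ∧ (y : ℝ) = 1 / (n : ℝ)) → charRecip y = 1 := by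
    intro y h
    unfold charRecip
    exact Set.indicator_of_mem (by exact h) _
  have hcr0 : ∀ y : UnitI, ¬(∃ n : ℕ, 1 ≤ n ∧ (y : ℝ) = 1 / (n : ℝ)) → charRecip y = 0 := by
    intro y h
    unfold charRecip
    exact Set.indicator_of_notMem (by exact h) _
  have hcm1 : ∀ x : UnitI, (x : ℝ) ∈ midThirds → charMidThirds x = 1 := by
    intro x h
    unfold charMidThirds
    exact Set.indicator_of_mem (by exact h) _
  have hcm0 : ∀ x : UnitI, (x : ℝ) ∉ midThirds → charMidThirds x = 0 := by
    intro x h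
    unfold charMidThirds
    exact Set.indicator_of_notMem (by exact h) _
  have key : ∀ q δ : ℚ, 0 < δ → ∀ k : UnitI → UnitI, Continuous k →
      ¬ ∀ (x : UnitI) (b : Bool),
          CorrectAnswerI charRecip (k x) q δ b →
            CorrectAnswerI charMidThirds x (1/2) (1/3) b := by
    intro q δ hδ k hk H
    have hδR : (0:ℝ) < (δ:ℝ) := by exact_mod_cast hδ
    have hcr01 : ∀ y : UnitI, charRecip y = 0 ∨ charRecip y = 1 := by
      intro y
      by_cases h : ∃ n : ℕ, 1 ≤ n ∧ (y : ℝ) = 1 / (n : ℝ)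
      · exact Or.inr (hcr1 y h)
      · exact Or.inl (hcr0 y h)
    have step1 : ∀ x : UnitI, (x : ℝ) ∈ midThirds → (q:ℝ) + (δ:ℝ) ≤ charRecip (k x) := by
      intro x hx
      by_contra hlt
      push_neg at hlt
      have := H x true (Or.inl ⟨rfl, hlt⟩)
      rcases this with ⟨-, hm⟩ | ⟨hb, -⟩
      · rw [hcm1 x hx] at hm
        push_cast at hm
        norm_num at hm
      · exact absurd hb (by simp)
    have step2 : ∀ x : UnitI, (x : ℝ) ∉ midThirds → charRecip (k x) ≤ (q:ℝ) - (δ:ℝ) := by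
      intro x hx
      by_contra hlt
      push_neg at hlt
      have := H x false (Or.inr ⟨rfl, hlt⟩)
      rcases this with ⟨hb, -⟩ | ⟨-, hm⟩
      · exact absurd hb (by simp)
      · rw [hcm0 x hx] at hm
        push_cast at hm
        norm_num at hm
    have h0m : (0:ℝ) ∈ Set.Icc (0:ℝ) 1 := by norm_num
    have h12m : (1/2:ℝ) ∈ Set.Icc (0:ℝ) 1 := by norm_num
    have h13m : (1/3:ℝ) ∈ Set.Icc (0:ℝ) 1 := by norm_num
    have hq1 : (q:ℝ) + (δ:ℝ) ≤ 1 := by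
      have h := step1 ⟨1/2, h12m⟩ half_mem_mid
      rcases hcr01 (k ⟨1/2, h12m⟩) with h' | h' <;> rw [h'] at h <;> linarith
    have hq0 : (0:ℝ) ≤ (q:ℝ) - (δ:ℝ) := by
      have h := step2 ⟨0, h0m⟩ zero_not_mid
      rcases hcr01 (k ⟨0, h0m⟩) with h' | h' <;> rw [h'] at h <;> linarith
    have memOf : ∀ x : UnitI, (x : ℝ) ∈ midThirds →
        ∃ n : ℕ, 1 ≤ n ∧ ((k x : UnitI) : ℝ) = 1 / (n : ℝ) := by
      intro x hx
      have h := step1 x hx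
      by_contra hc
      rw [hcr0 _ hc] at h
      linarith
    have notMemOf : ∀ x : UnitI, (x : ℝ) ∉ midThirds →
        ¬ ∃ n : ℕ, 1 ≤ n ∧ ((k x : UnitI) : ℝ) = 1 / (n : ℝ) := by
      intro x hx hc
      have h := step2 x hx
      rw [hcr1 _ hc] at h
      linarith
    set F : ℝ → ℝ := fun t => ((k (Set.projIcc 0 1 (by norm_num) t) : UnitI) : ℝ) with hFdef
    have hF : Continuous F :=
      continuous_subtype_val.comp (hk.comp continuous_projIcc)
    have hFval : ∀ (t : ℝ) (ht : t ∈ Set.Icc (0:ℝ) 1), F t = ((k ⟨t, ht⟩ : UnitI) : ℝ) := by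
      intro t ht
      exact congrArg (fun z : UnitI => ((k z : UnitI) : ℝ)) (Set.projIcc_of_mem _ ht)
    have hF01 : ∀ t : ℝ, 0 ≤ F t ∧ F t ≤ 1 := fun t => (k _).2
    obtain ⟨n, hn1, hkn⟩ := memOf ⟨1/2, h12m⟩ half_mem_mid
    have hF12 : F (1/2) = 1 / (n:ℝ) := by rw [hFval _ h12m]; exact hkn
    have h13nm : (1/3 : ℝ) ∉ midThirds :=
      not_mid_middle ⟨le_refl _, by norm_num⟩ (by norm_num)
    have hc13 : ¬ ∃ m : ℕ, 1 ≤ m ∧ F (1/3) = 1 / (m:ℝ) := by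
      rw [hFval _ h13m]
      exact notMemOf ⟨1/3, h13m⟩ h13nm
    have hcnn : 0 ≤ F (1/3) := (hF01 _).1
    have hnpos : (0:ℝ) < (n:ℝ) := by exact_mod_cast hn1
    rcases eq_or_lt_of_le hcnn with hc0 | hcpos
    · -- F (1/3) = 0 : intermediate value argument
      have hv1 : (0:ℝ) < 1 / ((n:ℝ)+1) := by positivity
      have hv2 : 1 / ((n:ℝ)+1) < 1 / (n:ℝ) := by
        apply one_div_lt_one_div_of_lt hnpos; linarith
      have hmemv : 1 / ((n:ℝ)+1) ∈ Set.Icc (F (1/3)) (F (1/2)) := by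
        rw [hF12, ← hc0]
        exact ⟨hv1.le, hv2.le⟩
      obtain ⟨x, hxI, hxv⟩ :=
        intermediate_value_Icc (by norm_num : (1/3:ℝ) ≤ 1/2) hF.continuousOn hmemv
      have hx01 : x ∈ Set.Icc (0:ℝ) 1 := ⟨by linarith [hxI.1], by linarith [hxI.2]⟩
      have hxne : x ≠ 1/2 := by
        intro h
        rw [h, hF12] at hxv
        linarith
      have hxnm : x ∉ midThirds :=
        not_mid_middle ⟨hxI.1, by linarith [hxI.2]⟩ hxne
      apply notMemOf ⟨x, hx01⟩ hxnm
      refine ⟨n+1, by omega, ?_⟩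
      rw [← hFval _ hx01, hxv]
      push_cast
      ring_nf
    · -- F (1/3) > 0 : gap argument
      have hcle1 : F (1/3) ≤ 1 := (hF01 _).2
      have hclt1 : F (1/3) < 1 := by
        rcases eq_or_lt_of_le hcle1 with h | h
        · exact absurd ⟨1, le_refl 1, by rw [h]; norm_num⟩ hc13
        · exact h
      set m : ℕ := ⌊1/(F (1/3))⌋₊ with hmdef
      have hinv1 : (1:ℝ) < 1/(F (1/3)) := by
        rw [lt_div_iff₀ hcpos]; linarith
      have hm1 : 1 ≤ m := by
        rw [hmdef]
        exact Nat.le_floor (by exact_mod_cast hinv1.le)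
      have hmpos : (0:ℝ) < (m:ℝ) := by exact_mod_cast hm1
      have hmle : (m:ℝ) ≤ 1/(F (1/3)) := Nat.floor_le (by positivity)
      have hmlt : 1/(F (1/3)) < (m:ℝ) + 1 := by
        have := Nat.lt_floor_add_one (1/(F (1/3)))
        exact_mod_cast this
      have hmne : (m:ℝ) ≠ 1/(F (1/3)) := by
        intro h
        apply hc13
        refine ⟨m, hm1, ?_⟩
        field_simp at h ⊢
        linarith [h]
      have hmlt' : (m:ℝ) < 1/(F (1/3)) := lt_of_le_of_ne hmle hmne
      have hgap1 : 1/((m:ℝ)+1) < F (1/3) := by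
        rw [div_lt_iff₀ (by positivity), ← div_lt_iff₀' hcpos]
        exact hmlt
      have hgap2 : F (1/3) < 1/(m:ℝ) := by
        rw [lt_div_iff₀ hmpos, ← lt_div_iff₀' hcpos]
        exact hmlt'
      set s : ℕ → ℝ := fun j => 1/3 - (3/2) * (1/3:ℝ)^(j+2) with hsdef
      have hs01 : ∀ j, s j ∈ Set.Icc (0:ℝ) 1 := by
        intro j
        have h1 : (1/3:ℝ)^(j+2) ≤ (1/3:ℝ)^2 :=
          pow_le_pow_of_le_one (by norm_num) (by norm_num) (by omega)
        have h2 : (0:ℝ) < (1/3:ℝ)^(j+2) := by positivity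
        constructor <;> simp only [hsdef] <;> nlinarith
      have hstend : Filter.Tendsto s Filter.atTop (nhds (1/3:ℝ)) := by
        rw [hsdef]
        have h1 : Filter.Tendsto (fun j : ℕ => (1/3:ℝ)^(j+2)) Filter.atTop (nhds 0) :=
          (tendsto_pow_atTop_nhds_zero_of_lt_one (by norm_num) (by norm_num)).comp
            (Filter.tendsto_add_atTop_nat 2)
        have h2 := (h1.const_mul (3/2:ℝ)).const_sub (1/3:ℝ)
        simpa using h2
      have hFs : Filter.Tendsto (fun j => F (s j)) Filter.atTop (nhds (F (1/3))) :=
        (hF.tendsto (1/3)).comp hstend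
      have hev : ∀ᶠ j in Filter.atTop, F (s j) ∈ Set.Ioo (1/((m:ℝ)+1)) (1/(m:ℝ)) :=
        hFs.eventually (isOpen_Ioo.mem_nhds ⟨hgap1, hgap2⟩)
      obtain ⟨j, hj⟩ := hev.exists
      obtain ⟨n', hn', hFn'⟩ := memOf ⟨s j, hs01 j⟩ (mu_mem_mid (j+2) (by omega))
      rw [← hFval _ (hs01 j)] at hFn'
      rw [hFn'] at hj
      have hn'pos : (0:ℝ) < (n':ℝ) := by exact_mod_cast hn'
      have l1 : (m:ℝ) < (n':ℝ) := by
        have := hj.2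
        rw [div_lt_div_iff₀ hn'pos hmpos] at this
        linarith
      have l2 : (n':ℝ) < (m:ℝ) + 1 := by
        have := hj.1
        rw [div_lt_div_iff₀ (by positivity) hn'pos] at this
        linarith
      have g1 : m < n' := by exact_mod_cast l1
      have g2 : n' < m + 1 := by
        have : (n':ℝ) < ((m+1 : ℕ):ℝ) := by push_cast; linarith
        exact_mod_cast this
      omega
  refine ⟨fun h => ?_, key⟩
  obtain ⟨q, δ, hδ, k, hk, H⟩ := h (1/2) (1/3) (by norm_num)
  exact key q δ hδ k hk H
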